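/- For every integer n ≥ 1, in the surface group G the elements u = c₁ and v = c₂^{1−n} c₁ c₂^{n−1} are conjugate, the word length of v equals 2n − 1, and CL(u,v) = n − 1; that is, the minimum of |x| over all x ∈ G with x⁻¹ c₁ x = c₂^{1−n} c₁ c₂^{n−1} equals n − 1. -/

import Mathlib

namespace SG

/-- A letter of the alphabet `S± = {cᵢ^{±1}}`: `(i, true)` is `c_{i+1}`,
`(i, false)` is `c_{i+1}⁻¹`. -/
abbrev Letter (g : ℕ) := Fin (2*g) × Bool

/-- A word in the alphabet `S±`. -/
abbrev Word (g : ℕ) := List (Letter g)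

/-- The surface relator `c₁c₂⋯c_{2g}c₁⁻¹c₂⁻¹⋯c_{2g}⁻¹` in the free group. -/
def relator (g : ℕ) : FreeGroup (Fin (2*g)) :=
  (List.ofFn fun i : Fin (2*g) => FreeGroup.of i).prod *
  (List.ofFn fun i : Fin (2*g) => (FreeGroup.of i)⁻¹).prod

/-- The surface group with the symmetric presentation. -/
abbrev SurfaceGroup (g : ℕ) :=
  PresentedGroup ({relator g} : Set (FreeGroup (Fin (2*g))))

/-- The generator `c_{i+1}` of the surface group. -/
def gen (g : ℕ) (i : Fin (2*g)) : SurfaceGroup g := PresentedGroup.of i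

/-- The inverse of a letter. -/
def invLetter (g : ℕ) (a : Letter g) : Letter g := (a.1, !a.2)

/-- The group element represented by a letter. -/
def evalLetter (g : ℕ) (a : Letter g) : SurfaceGroup g :=
  if a.2 then gen g a.1 else (gen g a.1)⁻¹

/-- The group element represented by a word. -/
def eval (g : ℕ) (W : Word g) : SurfaceGroup g := (W.map (evalLetter g)).prod

/-- The formal inverse `x_n⁻¹ ⋯ x₁⁻¹` of a word `x₁ ⋯ x_n`. -/
def wordInv (g : ℕ) (W : Word g) : Word g := (W.map (invLetter g)).reverse

/-- Word length of a group element: the least `n` such that the element is a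
product of `n` elements of `S ∪ S⁻¹`. -/
noncomputable def len (g : ℕ) (u : SurfaceGroup g) : ℕ :=
  sInf {n | ∃ W : Word g, W.length = n ∧ eval g W = u}

/-- `conjLen g u v` is the minimum of `|x|` over conjugators `x` with `x⁻¹ux = v`. -/
noncomputable def conjLen (g : ℕ) (u v : SurfaceGroup g) : ℕ :=
  sInf {k | ∃ x : SurfaceGroup g, x⁻¹ * u * x = v ∧ len g x = k}

/-- The conjugator length function: `CL g n` is the least `N` such that any
conjugate `u, v` with `|u| + |v| ≤ n` admit a conjugator of length `≤ N`. -/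
noncomputable def CL (g : ℕ) (n : ℕ) : ℕ :=
  sInf {N | ∀ u v : SurfaceGroup g,
    (∃ x : SurfaceGroup g, x⁻¹ * u * x = v) → len g u + len g v ≤ n →
      conjLen g u v ≤ N}

/-- Rank of a letter in the ascending order
`c_{2g} ≺ ⋯ ≺ c₂ ≺ c₁ ≺ c₁⁻¹ ≺ c₂⁻¹ ≺ ⋯ ≺ c_{2g}⁻¹`. -/
def rank (g : ℕ) (a : Letter g) : ℕ :=
  if a.2 then (2*g - 1) - (a.1 : ℕ) else 2*g + (a.1 : ℕ)

/-- The strict order `≺` on letters. -/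
def letterLt (g : ℕ) (a b : Letter g) : Prop := rank g a < rank g b

/-- The length-lexicographical order `≺` on words. -/
def wordLt (g : ℕ) (X Y : Word g) : Prop :=
  X.length < Y.length ∨ (X.length = Y.length ∧ List.Lex (letterLt g) X Y)

/-- A word is irreducible if it is the `≺`-least word representing its element. -/
def IrreducibleWord (g : ℕ) (W : Word g) : Prop :=
  ∀ W' : Word g, eval g W' = eval g W → W' = W ∨ wordLt g W W'

/-- A word is cyclically irreducible if all its cyclic permutations are irreducible. -/
def CyclicallyIrreducibleWord (g : ℕ) (W : Word g) : Prop :=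
  ∀ W' : Word g, List.IsRotated W W' → IrreducibleWord g W'

/-- A word is freely reduced if no letter is followed by its inverse. -/
def FreelyReduced (g : ℕ) (W : Word g) : Prop :=
  List.Chain' (fun a c => c ≠ invLetter g a) W

/-- The normal form of a group element: the `≺`-least word representing it. -/
noncomputable def nf (g : ℕ) (x : SurfaceGroup g) : Word g := by
  classical
  exact if h : ∃ W : Word g, eval g W = x ∧ IrreducibleWord g W then h.choose else []

/-- The word `R = c₁c₂⋯c_{2g}c₁⁻¹c₂⁻¹⋯c_{2g}⁻¹`. -/
def Rword (g : ℕ) : Word g :=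
  (List.ofFn fun i : Fin (2*g) => ((i, true) : Letter g)) ++
  (List.ofFn fun i : Fin (2*g) => ((i, false) : Letter g))

/-- `𝓡`: all cyclic permutations of `R` and of `R⁻¹`. -/
def RSet (g : ℕ) : Set (Word g) :=
  {W | List.IsRotated (Rword g) W ∨ List.IsRotated (wordInv g (Rword g)) W}

/-- `seg g b i k` is the word `b_i b_{i+1} ⋯ b_{i+k-1}`. -/
def seg (g : ℕ) (b : ℕ → Letter g) (i k : ℕ) : Word g :=
  (List.range k).map fun j => b (i + j)

/-- `dseg g b i k` is the descending word `b_i b_{i-1} ⋯ b_{i-k+1}`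
(indices taken modulo `4g`, using periodicity of `b`). -/
def dseg (g : ℕ) (b : ℕ → Letter g) (i k : ℕ) : Word g :=
  (List.range k).map fun j => b (i + 4*g - j)

/-- `b : ℕ → Letter g` is a `4g`-periodic (1-based) enumeration of the letters
`b₁, …, b_{4g}` of some word `b₁⋯b_{4g} ∈ 𝓡`. -/
def RelSeq (g : ℕ) (b : ℕ → Letter g) : Prop :=
  (∀ i, b (i + 4*g) = b i) ∧ seg g b 1 (4*g) ∈ RSet g

/-- The `t`-th power `W^t` of a word. -/
def wpow (g : ℕ) (W : Word g) (t : ℕ) : Word g := (List.replicate t W).flatten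

/-- A `k`-fractional relator: an initial segment of length `k` (with `2 ≤ k ≤ 4g`)
of some word in `𝓡`. -/
def IsFR (g : ℕ) (k : ℕ) (W : Word g) : Prop :=
  2 ≤ k ∧ k ≤ 4*g ∧ ∃ B ∈ RSet g, W = B.take k

/-- `IsLLFROcc g k W P F Q` : the factorization `W = P ++ F ++ Q` exhibits `F`
as a `k`-locally longest fractional relator of `W`. -/
def IsLLFROcc (g : ℕ) (k : ℕ) (W P F Q : Word g) : Prop :=
  W = P ++ F ++ Q ∧ IsFR g k F ∧
  (∀ a, P.getLast? = some a → ¬ IsFR g (k+1) (a :: F)) ∧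
  (∀ a, Q.head? = some a → ¬ IsFR g (k+1) (F ++ [a]))

/-- `W` contains a `k`-LLFR. -/
def HasLLFR (g : ℕ) (k : ℕ) (W : Word g) : Prop :=
  ∃ P F Q, IsLLFROcc g k W P F Q

/-- Length-lexicographical order on pairs of words. -/
def pairLt (g : ℕ) (p q : Word g × Word g) : Prop :=
  wordLt g p.1 q.1 ∨ (p.1 = q.1 ∧ wordLt g p.2 q.2)

/-- A candidate for the reducing-subword pair of `(W₁, W₂)`. -/
def IsRSCand (g : ℕ) (W₁ W₂ C₁ C₂ : Word g) : Prop :=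
  ∃ A B C' : Word g, W₁ = A ++ C₁ ∧ W₂ = C₂ ++ B ∧
    nf g (eval g (W₁ ++ W₂)) = A ++ C' ++ B

/-- `(C₁, C₂)` is the reducing-subword pair `rs(W₁, W₂)`: the `≺`-least candidate. -/
def IsRS (g : ℕ) (W₁ W₂ C₁ C₂ : Word g) : Prop :=
  IsRSCand g W₁ W₂ C₁ C₂ ∧
  ∀ D₁ D₂ : Word g, IsRSCand g W₁ W₂ D₁ D₂ →
    (C₁ = D₁ ∧ C₂ = D₂) ∨ pairLt g (C₁, C₂) (D₁, D₂)

end SG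

/-!
Send the surface group to the affine group of `ℚ` by `c₁ ↦ (x ↦ x + 1)`, `c₂ ↦ (x ↦ 2x)`,
`c₃, c₄ ↦` the inverses of these, and the other generators to `1`; the relator maps to `1`.
Conjugating the translation by an affine map `f` gives the translation by `2 ^ (-exp f)`, so
every conjugator `x` of `c₁` into `v = c₂^{1-n} c₁ c₂^{n-1}` has image of exponent `n - 1`; as
each letter changes the exponent by at most one, `|x| ≥ n - 1`. The element `v` maps to the
translation by `2^{1-n}`: a word for it has to dilate down `n - 1` times, translate once and
dilate back up, which the potential `lengthBound` turns into `|v| ≥ 2n - 1`. The words `c₂^{n-1}`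
and `c₂^{1-n} c₁ c₂^{n-1}` give the matching upper bounds.
-/

theorem padicValRat_two_zpow (j : ℤ) : padicValRat 2 ((2 : ℚ) ^ j) = j := by
  have h2 : padicValRat 2 (2 : ℚ) = 1 := padicValRat.self one_lt_two
  rw [padicValRat.zpow, h2, mul_one]

/-- The affine maps `x ↦ 2 ^ exp * x + shift` of `ℚ`, multiplied by composition. -/
@[ext]
structure DyadicAffine where
  shift : ℚ
  exp : ℤ

namespace DyadicAffine

instance : Mul DyadicAffine := ⟨fun f h => ⟨f.shift + 2 ^ f.exp * h.shift, f.exp + h.exp⟩⟩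
instance : One DyadicAffine := ⟨⟨0, 0⟩⟩
instance : Inv DyadicAffine := ⟨fun f => ⟨-(2 ^ (-f.exp) * f.shift), -f.exp⟩⟩

@[simp] theorem mul_shift (f h : DyadicAffine) :
    (f * h).shift = f.shift + 2 ^ f.exp * h.shift := rfl
@[simp] theorem mul_exp (f h : DyadicAffine) : (f * h).exp = f.exp + h.exp := rfl
@[simp] theorem one_shift : (1 : DyadicAffine).shift = 0 := rfl
@[simp] theorem one_exp : (1 : DyadicAffine).exp = 0 := rfl
@[simp] theorem inv_shift (f : DyadicAffine) : f⁻¹.shift = -(2 ^ (-f.exp) * f.shift) := rfl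
@[simp] theorem inv_exp (f : DyadicAffine) : f⁻¹.exp = -f.exp := rfl

instance : Group DyadicAffine where
  mul_assoc f h k := by ext <;> simp [zpow_add₀ (two_ne_zero (α := ℚ))] <;> ring
  one_mul f := by ext <;> simp
  mul_one f := by ext <;> simp
  inv_mul_cancel f := by ext <;> simp [zpow_neg]

def translation : DyadicAffine := ⟨1, 0⟩
def dilation : DyadicAffine := ⟨0, 1⟩

@[simp] theorem dilation_pow (t : ℕ) : dilation ^ t = ⟨0, t⟩ := by
  induction t with
  | zero => rfl
  | succ t ih => rw [pow_succ, ih]; ext <;> simp [dilation]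

theorem inv_mul_translation_mul (f : DyadicAffine) :
    f⁻¹ * translation * f = ⟨2 ^ (-f.exp), 0⟩ := by
  ext <;> simp [translation, zpow_neg]

def generators : Set DyadicAffine :=
  {1, translation, translation⁻¹, dilation, dilation⁻¹}

theorem inv_mem_generators {s : DyadicAffine} (hs : s ∈ generators) : s⁻¹ ∈ generators := by
  simp only [generators, Set.mem_insert_iff, Set.mem_singleton_iff] at hs ⊢
  rcases hs with rfl | rfl | rfl | rfl | rfl <;> simp

theorem abs_exp_mul_le {s : DyadicAffine} (hs : s ∈ generators) (f : DyadicAffine) :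
    |(s * f).exp| ≤ |f.exp| + 1 := by
  simp only [generators, Set.mem_insert_iff, Set.mem_singleton_iff] at hs
  rw [abs_eq_max_neg, abs_eq_max_neg]
  rcases hs with rfl | rfl | rfl | rfl | rfl <;> simp [translation, dilation] <;> omega

theorem exp_eq_of_inv_mul_translation_mul_eq {f f' : DyadicAffine}
    (h : f⁻¹ * translation * f = f'⁻¹ * translation * f') : f.exp = f'.exp := by
  rw [inv_mul_translation_mul, inv_mul_translation_mul] at h
  exact neg_injective (zpow_right_injective₀ two_pos (by norm_num) (congrArg shift h))

/-- A lower bound for the length of `f` as a word in `generators`: if `f.shift ≠ 0`, the word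
contains a translation, and since `f.shift` is a sum of `±2 ^ e` over exponents `e` reached by its
prefixes, it must dilate from `0` down to some `e ≤ min (v₂ f.shift) f.exp 0`, then up to
`f.exp`. -/
noncomputable def lengthBound (f : DyadicAffine) : ℤ :=
  if f.shift = 0 then |f.exp|
  else f.exp - 2 * min (min (padicValRat 2 f.shift) f.exp) 0 + 1

theorem lengthBound_two_zpow_neg (t : ℕ) : lengthBound ⟨2 ^ (-(t : ℤ)), 0⟩ = 2 * t + 1 := by
  simp only [lengthBound, if_neg (zpow_ne_zero _ (two_ne_zero (α := ℚ))), padicValRat_two_zpow]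
  omega

theorem lengthBound_translate {ε : ℚ} (hε : ε ≠ 0) (hvε : padicValRat 2 ε = 0)
    (f : DyadicAffine) :
    lengthBound ⟨ε + f.shift, f.exp⟩ ≤ lengthBound f + 1 := by
  obtain ⟨m, k⟩ := f
  simp only [lengthBound, abs_eq_max_neg]
  by_cases hm : m = 0
  · subst hm
    simp only [add_zero, if_neg hε, hvε, if_pos]
    omega
  by_cases hεm : ε + m = 0
  · have hvm : padicValRat 2 m = 0 := by
      rw [eq_neg_of_add_eq_zero_right hεm, padicValRat.neg, hvε]
    simp only [if_pos hεm, if_neg hm, hvm]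
    omega
  · have hv := padicValRat.min_le_padicValRat_add (p := 2) hεm
    simp only [if_neg hεm, if_neg hm]
    rw [hvε] at hv
    omega

theorem lengthBound_dilate {δ : ℤ} (hδ : |δ| ≤ 1) (f : DyadicAffine) :
    lengthBound ⟨2 ^ δ * f.shift, δ + f.exp⟩ ≤ lengthBound f + 1 := by
  obtain ⟨m, k⟩ := f
  simp only [lengthBound, abs_eq_max_neg] at hδ ⊢
  by_cases hm : m = 0
  · simp only [hm, mul_zero, if_pos]
    omega
  · have h2δ : (2 : ℚ) ^ δ ≠ 0 := zpow_ne_zero _ two_ne_zero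
    have hv : padicValRat 2 (2 ^ δ * m) = δ + padicValRat 2 m := by
      rw [padicValRat.mul h2δ hm, padicValRat_two_zpow]
    simp only [if_neg hm, if_neg (mul_ne_zero h2δ hm), hv]
    omega

theorem lengthBound_mul_le {s : DyadicAffine} (hs : s ∈ generators) (f : DyadicAffine) :
    lengthBound (s * f) ≤ lengthBound f + 1 := by
  simp only [generators, Set.mem_insert_iff, Set.mem_singleton_iff] at hs
  rcases hs with rfl | rfl | rfl | rfl | rfl
  · simp
  · convert lengthBound_translate one_ne_zero padicValRat.one f using 2
    ext <;> simp [translation]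
  · convert lengthBound_translate (neg_ne_zero.2 one_ne_zero) (by simp) f using 2
    ext <;> simp [translation]
  · convert lengthBound_dilate (δ := 1) (by simp) f using 2
    ext <;> simp [dilation]
  · convert lengthBound_dilate (δ := -1) (by simp) f using 2
    ext <;> simp [dilation, zpow_neg]

end DyadicAffine

open DyadicAffine

theorem List.prod_ofFn_eq_prod_range_of_eq_one {M : Type*} [Monoid M] {f : ℕ → M} {k N : ℕ}
    (hkN : k ≤ N) (hf : ∀ j, k ≤ j → f j = 1) :
    (List.ofFn fun i : Fin N => f i).prod = ((List.range k).map f).prod := by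
  obtain ⟨t, rfl⟩ := Nat.exists_eq_add_of_le hkN
  have hfun : (fun i : Fin (k + t) => f i) = f ∘ Fin.val := rfl
  have htail : (((List.range t).map (k + ·)).map f).prod = 1 := by
    refine List.prod_eq_one ?_
    simp only [List.map_map, List.mem_map, Function.comp_apply]
    rintro _ ⟨j, -, rfl⟩
    exact hf _ (Nat.le_add_right k j)
  rw [List.ofFn_eq_map, hfun, ← List.map_map, List.map_coe_finRange_eq_range, List.range_add,
    List.map_append, List.prod_append, htail, mul_one]

namespace SG

variable {g : ℕ}

theorem eval_cons (a : Letter g) (W : Word g) : eval g (a :: W) = evalLetter g a * eval g W := by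
  simp [eval]

theorem eval_append (W₁ W₂ : Word g) : eval g (W₁ ++ W₂) = eval g W₁ * eval g W₂ := by
  simp [eval]

theorem eval_replicate (t : ℕ) (a : Letter g) :
    eval g (List.replicate t a) = evalLetter g a ^ t := by
  simp [eval, List.map_replicate, List.prod_replicate]

theorem exists_eval_eq (u : SurfaceGroup g) : ∃ W : Word g, eval g W = u := by
  induction u using PresentedGroup.induction_on with | H z => ?_
  induction z using FreeGroup.induction_on with
  | C1 => exact ⟨[], rfl⟩
  | of i => exact ⟨[(i, true)], by simp [eval, evalLetter, gen]; rfl⟩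
  | inv_of i _ => exact ⟨[(i, false)], by simp [eval, evalLetter, gen]; rfl⟩
  | mul x y hx hy =>
    obtain ⟨W₁, hW₁⟩ := hx
    obtain ⟨W₂, hW₂⟩ := hy
    exact ⟨W₁ ++ W₂, by rw [eval_append, hW₁, hW₂, map_mul]⟩

theorem len_le_length {u : SurfaceGroup g} (W : Word g) (hW : eval g W = u) :
    len g u ≤ W.length :=
  Nat.sInf_le ⟨W, rfl, hW⟩

theorem exists_length_eq_len (u : SurfaceGroup g) :
    ∃ W : Word g, W.length = len g u ∧ eval g W = u :=
  Nat.sInf_mem (s := {n | ∃ W : Word g, W.length = n ∧ eval g W = u})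
    (let ⟨W, hW⟩ := exists_eval_eq u; ⟨W.length, W, rfl, hW⟩)

theorem le_len_of_le_add_one {f : SurfaceGroup g → ℤ} (hf₁ : f 1 ≤ 0)
    (hf : ∀ a x, f (evalLetter g a * x) ≤ f x + 1) (u : SurfaceGroup g) : f u ≤ len g u := by
  have hword : ∀ W : Word g, f (eval g W) ≤ W.length := by
    intro W
    induction W with
    | nil => exact hf₁
    | cons a W ih =>
      rw [eval_cons, List.length_cons, Nat.cast_succ]
      exact (hf a _).trans (by linarith)
  obtain ⟨W, hW, rfl⟩ := exists_length_eq_len u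
  exact hW ▸ hword W

theorem conjLen_eq {u v x : SurfaceGroup g} {N : ℕ} (hx : x⁻¹ * u * x = v)
    (hxN : len g x ≤ N) (hN : ∀ y, y⁻¹ * u * y = v → N ≤ len g y) : conjLen g u v = N := by
  unfold conjLen
  have hx' : len g x ∈ {k | ∃ y : SurfaceGroup g, y⁻¹ * u * y = v ∧ len g y = k} :=
    ⟨x, hx, rfl⟩
  obtain ⟨y, hy, hyk⟩ := Nat.sInf_mem ⟨_, hx'⟩
  exact le_antisymm ((Nat.sInf_le hx').trans hxN) (hyk ▸ hN y hy)

/-- With `a = translation` and `b = dilation`, the two halves of the relator map to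
`a b b⁻¹ a⁻¹ = 1` and `a⁻¹ b⁻¹ b a = 1`. -/
def genImage (j : ℕ) : DyadicAffine :=
  [translation, dilation, dilation⁻¹, translation⁻¹].getD j 1

@[simp] theorem genImage_zero : genImage 0 = translation := rfl

@[simp] theorem genImage_one : genImage 1 = dilation := rfl

theorem genImage_eq_one {j : ℕ} (hj : 4 ≤ j) : genImage j = 1 :=
  List.getD_eq_default _ _ (by simpa using hj)

theorem genImage_mem_generators (j : ℕ) : genImage j ∈ generators := by
  rcases lt_or_ge j 4 with hj | hj
  · interval_cases j <;> simp [genImage, generators]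
  · simp [genImage_eq_one hj, generators]

theorem lift_genImage_relator (hg : 2 ≤ g) :
    FreeGroup.lift (fun i : Fin (2 * g) => genImage i) (relator g) = 1 := by
  have hinv : ∀ j, 4 ≤ j → (genImage j)⁻¹ = 1 := fun j hj => by
    rw [genImage_eq_one hj, inv_one]
  simp only [relator, map_mul, map_list_prod, List.map_ofFn, Function.comp_def,
    FreeGroup.lift_apply_of, map_inv]
  rw [List.prod_ofFn_eq_prod_range_of_eq_one (by omega) (fun _ => genImage_eq_one),
    List.prod_ofFn_eq_prod_range_of_eq_one (f := fun j => (genImage j)⁻¹) (by omega) hinv]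
  simp [genImage, List.range_succ]

noncomputable def toDyadicAffine (hg : 2 ≤ g) : SurfaceGroup g →* DyadicAffine :=
  PresentedGroup.toGroup fun _ hr => (Set.mem_singleton_iff.1 hr) ▸ lift_genImage_relator hg

theorem toDyadicAffine_gen (hg : 2 ≤ g) (i : Fin (2 * g)) :
    toDyadicAffine hg (gen g i) = genImage i :=
  PresentedGroup.toGroup.of _

theorem toDyadicAffine_evalLetter_mem (hg : 2 ≤ g) (a : Letter g) :
    toDyadicAffine hg (evalLetter g a) ∈ generators := by
  unfold evalLetter
  split_ifs
  · rw [toDyadicAffine_gen]; exact genImage_mem_generators _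
  · rw [map_inv, toDyadicAffine_gen]; exact inv_mem_generators (genImage_mem_generators _)

theorem abs_exp_le_len (hg : 2 ≤ g) (u : SurfaceGroup g) :
    |(toDyadicAffine hg u).exp| ≤ len g u :=
  le_len_of_le_add_one (f := fun u => |(toDyadicAffine hg u).exp|) (by simp)
    (fun a x => by simpa using abs_exp_mul_le (toDyadicAffine_evalLetter_mem hg a) _) u

theorem lengthBound_le_len (hg : 2 ≤ g) (u : SurfaceGroup g) :
    lengthBound (toDyadicAffine hg u) ≤ len g u :=
  le_len_of_le_add_one (f := fun u => lengthBound (toDyadicAffine hg u)) (by simp [lengthBound])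
    (fun a x => by simpa using lengthBound_mul_le (toDyadicAffine_evalLetter_mem hg a) _) u

theorem len_gen_pow_le (i : Fin (2 * g)) (t : ℕ) : len g (gen g i ^ t) ≤ t := by
  simpa using len_le_length (List.replicate t (i, true)) (by simp [eval_replicate, evalLetter])

theorem len_inv_pow_mul_mul_pow_le (i j : Fin (2 * g)) (t : ℕ) :
    len g ((gen g i ^ t)⁻¹ * gen g j * gen g i ^ t) ≤ 2 * t + 1 := by
  have hW : eval g (List.replicate t (i, false) ++ (j, true) :: List.replicate t (i, true)) =
      (gen g i ^ t)⁻¹ * gen g j * gen g i ^ t := by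
    simp [eval_append, eval_cons, eval_replicate, evalLetter, inv_pow, mul_assoc]
  have := len_le_length _ hW
  simp only [List.length_append, List.length_cons, List.length_replicate] at this
  omega

theorem len_inv_pow_mul_mul_pow (hg : 2 ≤ g) {i j : Fin (2 * g)} (hi : (i : ℕ) = 1)
    (hj : (j : ℕ) = 0) (t : ℕ) : len g ((gen g i ^ t)⁻¹ * gen g j * gen g i ^ t) = 2 * t + 1 := by
  refine le_antisymm (len_inv_pow_mul_mul_pow_le i j t) ?_
  have := lengthBound_le_len hg ((gen g i ^ t)⁻¹ * gen g j * gen g i ^ t)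
  simp only [map_mul, map_inv, map_pow, toDyadicAffine_gen, hi, hj, genImage_zero, genImage_one,
    inv_mul_translation_mul, dilation_pow, lengthBound_two_zpow_neg] at this
  exact_mod_cast this

theorem conjLen_gen_inv_pow_mul_mul_pow (hg : 2 ≤ g) {i j : Fin (2 * g)} (hi : (i : ℕ) = 1)
    (hj : (j : ℕ) = 0) (t : ℕ) :
    conjLen g (gen g j) ((gen g i ^ t)⁻¹ * gen g j * gen g i ^ t) = t := by
  refine conjLen_eq rfl (len_gen_pow_le i t) fun y hy => ?_
  have hexp : (toDyadicAffine hg y).exp = t := by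
    simpa using exp_eq_of_inv_mul_translation_mul_eq (f' := dilation ^ t) (by
      simpa [toDyadicAffine_gen, hi, hj] using congrArg (toDyadicAffine hg) hy)
  exact_mod_cast hexp ▸ abs_exp_le_len hg y

end SG

/-- In the surface group, `u = c₁` and `v = c₂^{1−n} c₁ c₂^{n−1}` are
conjugate, `|v| = 2n − 1`, and the minimal length of a conjugator equals `n − 1`. -/
theorem surface_group_conjugator_example (g : ℕ) (hg : 2 ≤ g) (n : ℕ) (hn : 1 ≤ n) :
    (∃ x : SG.SurfaceGroup g,
        x⁻¹ * SG.gen g ⟨0, by omega⟩ * x =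
          (SG.gen g ⟨1, by omega⟩) ^ ((1 : ℤ) - (n : ℤ)) * SG.gen g ⟨0, by omega⟩ *
            (SG.gen g ⟨1, by omega⟩) ^ ((n : ℤ) - 1)) ∧
    SG.len g ((SG.gen g ⟨1, by omega⟩) ^ ((1 : ℤ) - (n : ℤ)) * SG.gen g ⟨0, by omega⟩ *
        (SG.gen g ⟨1, by omega⟩) ^ ((n : ℤ) - 1)) = 2*n - 1 ∧
    SG.conjLen g (SG.gen g ⟨0, by omega⟩)
      ((SG.gen g ⟨1, by omega⟩) ^ ((1 : ℤ) - (n : ℤ)) * SG.gen g ⟨0, by omega⟩ *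
        (SG.gen g ⟨1, by omega⟩) ^ ((n : ℤ) - 1)) = n - 1 := by
  obtain ⟨t, rfl⟩ := Nat.exists_eq_add_of_le' hn
  have hzpow : ∀ y z : SG.SurfaceGroup g, y ^ ((1 : ℤ) - ((t + 1 : ℕ) : ℤ)) * z *
      y ^ (((t + 1 : ℕ) : ℤ) - 1) = (y ^ t)⁻¹ * z * y ^ t := by
    intro y z
    rw [Nat.cast_succ, sub_add_cancel_right, add_sub_cancel_right, zpow_neg, zpow_natCast]
  simp only [hzpow, Nat.add_sub_cancel, show 2 * (t + 1) - 1 = 2 * t + 1 by omega]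
  exact ⟨⟨_, rfl⟩, SG.len_inv_pow_mul_mul_pow hg rfl rfl t,
    SG.conjLen_gen_inv_pow_mul_mul_pow hg rfl rfl t⟩
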